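/- For a prime p, the number of entries among the first p^n rows of Pascal's triangle (rows 0 through p^n − 1) that are not divisible by p equals (p(p+1)/2)^n. -/

import Mathlib

/-!
By Lucas' theorem, writing `m = p * b + a` and `k = p * q + r` with `a, r < p`, the prime `p`
fails to divide `C(m, k)` exactly when `r ≤ a` and `p ∤ C(b, q)`. So row `p * b + a` has `a + 1`
times as many entries prime to `p` as row `b`, and passing from the first `N` rows to the first
`p * N` rows multiplies the count by `1 + 2 + ⋯ + p = p(p+1)/2`.
-/

open Finset

namespace Nat

variable {p a b q r : ℕ}

theorem Prime.dvd_choose_iff_lt (hp : p.Prime) (ha : a < p) : p ∣ a.choose r ↔ a < r := by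
  refine ⟨fun h => ?_, fun h => choose_eq_zero_of_lt h ▸ dvd_zero p⟩
  by_contra! hr
  exact (hp.coprime_iff_not_dvd.mp (hp.coprime_choose_of_lt ha hr)) h

theorem Prime.not_dvd_choose_mul_add_iff (hp : p.Prime) (ha : a < p) (hr : r < p) :
    ¬ p ∣ (p * b + a).choose (p * q + r) ↔ r ≤ a ∧ ¬ p ∣ b.choose q := by
  have := Fact.mk hp
  have lucas : (p * b + a).choose (p * q + r) ≡ a.choose r * b.choose q [MOD p] := by
    simpa [mul_add_mod_of_lt, mul_add_div hp.pos, div_eq_of_lt, mod_eq_of_lt, ha, hr] using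
      Choose.choose_modEq_choose_mod_mul_choose_div_nat (p := p) (n := p * b + a) (k := p * q + r)
  rw [lucas.dvd_iff dvd_rfl, hp.dvd_mul, hp.dvd_choose_iff_lt ha]
  omega

theorem le_of_not_dvd_choose {m k : ℕ} (h : ¬ p ∣ m.choose k) : k ≤ m := by
  by_contra! hk
  exact h (choose_eq_zero_of_lt hk ▸ dvd_zero p)

end Nat

theorem Finset.sum_range_mul {M : Type*} [AddCommMonoid M] (f : ℕ → M) (p N : ℕ) :
    ∑ m ∈ range (p * N), f m = ∑ b ∈ range N, ∑ a ∈ range p, f (p * b + a) := by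
  induction N with
  | zero => simp
  | succ N ih => rw [Nat.mul_succ, sum_range_add, ih, sum_range_succ]

def notDvdChooseCount (p m : ℕ) : ℕ := #{k ∈ range (m + 1) | ¬ p ∣ m.choose k}

theorem notDvdChooseCount_mul_add {p a b : ℕ} (hp : p.Prime) (ha : a < p) :
    notDvdChooseCount p (p * b + a) = (a + 1) * notDvdChooseCount p b := by
  rw [notDvdChooseCount, notDvdChooseCount, ← card_range (a + 1), ← card_product]
  refine card_nbij' (fun k => (k % p, k / p)) (fun x => p * x.2 + x.1) ?_ ?_ ?_ ?_
  · intro k hk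
    simp only [mem_coe, mem_filter, mem_product, mem_range] at hk ⊢
    rw [← Nat.div_add_mod k p, hp.not_dvd_choose_mul_add_iff ha (Nat.mod_lt k hp.pos)] at hk
    have := Nat.le_of_not_dvd_choose hk.2.2
    omega
  · rintro ⟨r, q⟩ h
    simp only [mem_coe, mem_filter, mem_product, mem_range] at h ⊢
    have hr : r < p := by omega
    have := Nat.mul_le_mul_left p (Nat.le_of_not_dvd_choose h.2.2)
    rw [hp.not_dvd_choose_mul_add_iff ha hr]
    omega
  · intro k _
    exact Nat.div_add_mod k p
  · rintro ⟨r, q⟩ h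
    have hr : r < p := by simp at h; omega
    simp [Nat.mul_add_div hp.pos, Nat.div_eq_of_lt hr, Nat.mod_eq_of_lt hr]

theorem sum_notDvdChooseCount_mul {p : ℕ} (hp : p.Prime) (N : ℕ) :
    ∑ m ∈ range (p * N), notDvdChooseCount p m =
      p * (p + 1) / 2 * ∑ m ∈ range N, notDvdChooseCount p m := by
  have gauss : ∑ a ∈ range p, (a + 1) = p * (p + 1) / 2 := by
    calc ∑ a ∈ range p, (a + 1) = ∑ i ∈ range (p + 1), i := (sum_range_succ' (fun i => i) p).symm
      _ = p * (p + 1) / 2 := by rw [sum_range_id, Nat.add_sub_cancel, mul_comm]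
  rw [sum_range_mul, mul_sum]
  refine sum_congr rfl fun b _ => ?_
  rw [sum_congr rfl fun a ha => notDvdChooseCount_mul_add hp (mem_range.mp ha), ← sum_mul, gauss]

/-- Among rows `0` through `p^n - 1` of Pascal's triangle, the number of entries
not divisible by the prime `p` is `(p(p+1)/2)^n`. -/
theorem count_not_dvd_first_pow_rows (p : ℕ) (hp : p.Prime) (n : ℕ) :
    (∑ m ∈ Finset.range (p ^ n),
        ((Finset.range (m + 1)).filter (fun k => ¬ p ∣ m.choose k)).card) =
      (p * (p + 1) / 2) ^ n := by
  change ∑ m ∈ range (p ^ n), notDvdChooseCount p m = _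
  induction n with
  | zero => simp [notDvdChooseCount, filter_singleton, hp.ne_one]
  | succ n ih => rw [pow_succ', sum_notDvdChooseCount_mul hp, ih, pow_succ']
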